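/- arXiv:2002.06281 — 2 statements merged into one kernel-verified Lean document; each statement's English description precedes it below -/
import Mathlib

section
/- If t ≥ 0, ρ(k) ≤ ρ_c, and (k−1)X + t·w ≤ x ≤ (k−1)X + t·v_f, then the Lax–Hopf solution associated with the k-th initial value condition satisfies M_{M_k}(t, x) = −Σ_{i=1}^{k−1} ρ(i)·X + ρ_c·(t·v_f + (k−1)X − x). -/
/-- The triangular fundamental diagram: `ψ(ρ) = v_f·ρ` for `ρ ≤ ρ_c` and
`ψ(ρ) = w·(ρ − ρ_m)` otherwise. -/
noncomputable def fd (vf w ρc ρm : ℝ) (ρ : ℝ) : ℝ :=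
  if ρ ≤ ρc then vf * ρ else w * (ρ - ρm)

/-- The transform `φ*(u) = sup_{p ∈ [0, ρ_m]} (p·u + ψ(p))`. -/
noncomputable def phiStar (vf w ρc ρm : ℝ) (u : ℝ) : ℝ :=
  sSup ((fun p => p * u + fd vf w ρc ρm p) '' Set.Icc 0 ρm)

/-- The Lax–Hopf solution associated with a value condition `c : ℝ × ℝ → ℝ ∪ {+∞}`
(modeled with values in `EReal`):
`M_c(t, x) = inf { c(t − T, x + T·u) + T·φ*(u) : T ≥ 0, u ∈ [−v_f, −w] }`. -/
noncomputable def laxHopf (vf w ρc ρm : ℝ) (c : ℝ × ℝ → EReal) (t x : ℝ) : EReal :=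
  ⨅ (T : ℝ) (_ : 0 ≤ T) (u : ℝ) (_ : u ∈ Set.Icc (-vf) (-w)),
    c (t - T, x + T * u) + ((T * phiStar vf w ρc ρm u : ℝ) : EReal)

/-- The `k`-th initial value condition: for `x ∈ [(k−1)X, kX]`,
`M_k(0, x) = −Σ_{i=1}^{k−1} ρ(i)·X − ρ(k)·(x − (k−1)X)`, and `+∞` elsewhere. -/
noncomputable def initCond (X : ℝ) (ρ : ℕ → ℝ) (k : ℕ) : ℝ × ℝ → EReal := fun p =>
  if p.1 = 0 ∧ ((k : ℝ) - 1) * X ≤ p.2 ∧ p.2 ≤ (k : ℝ) * X then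
    (((-(∑ i ∈ Finset.Icc 1 (k - 1), ρ i * X) - ρ k * (p.2 - ((k : ℝ) - 1) * X)) : ℝ) : EReal)
  else ⊤

lemma phiStar_eq (vf ρc ρm w : ℝ) (hρc : 0 < ρc)
    (hρcm : ρc < ρm) (hw : w = vf * ρc / (ρc - ρm)) (u : ℝ)
    (hu : u ∈ Set.Icc (-vf) (-w)) :
    phiStar vf w ρc ρm u = ρc * (u + vf) := by
  have hne : ρc - ρm ≠ 0 := by linarith
  have key : w * (ρc - ρm) = vf * ρc := by rw [hw]; field_simp
  apply IsGreatest.csSup_eq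
  constructor
  · exact ⟨ρc, ⟨le_of_lt hρc, le_of_lt hρcm⟩, by simp [fd]; ring⟩
  · rintro y ⟨p, ⟨hp0, hpm⟩, rfl⟩
    simp only [fd]
    split_ifs with h
    · nlinarith [hu.1]
    · push_neg at h
      have hu2 : u ≤ -w := hu.2
      nlinarith [mul_nonpos_of_nonneg_of_nonpos (by linarith : (0:ℝ) ≤ p - ρc)
        (by linarith : u + w ≤ 0)]


/-- If `t ≥ 0`, `ρ(k) ≤ ρ_c`, and `(k−1)X + t·w ≤ x ≤ (k−1)X + t·v_f`, then
`M_{M_k}(t, x) = −Σ_{i=1}^{k−1} ρ(i)·X + ρ_c·(t·v_f + (k−1)X − x)`. -/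
theorem laxHopf_initCond_freeflow_fan (vf ρc ρm w X : ℝ) (hvf : 0 < vf) (hρc : 0 < ρc)
    (hρcm : ρc < ρm) (hw : w = vf * ρc / (ρc - ρm)) (hX : 0 < X)
    (kmax : ℕ) (hkmax : 1 ≤ kmax) (ρ : ℕ → ℝ)
    (hρ : ∀ i : ℕ, 1 ≤ i → i ≤ kmax → ρ i ∈ Set.Icc 0 ρm)
    (k : ℕ) (hk1 : 1 ≤ k) (hk2 : k ≤ kmax) (t x : ℝ) (ht : 0 ≤ t)
    (hρk : ρ k ≤ ρc)
    (hx1 : ((k : ℝ) - 1) * X + t * w ≤ x) (hx2 : x ≤ ((k : ℝ) - 1) * X + t * vf) :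
    laxHopf vf w ρc ρm (initCond X ρ k) t x =
      (((-(∑ i ∈ Finset.Icc 1 (k - 1), ρ i * X)
          + ρc * (t * vf + ((k : ℝ) - 1) * X - x)) : ℝ) : EReal) := by
  have hw0 : w < 0 := by
    rw [hw]; exact div_neg_of_pos_of_neg (by positivity) (by linarith)
  set S : ℝ := ∑ i ∈ Finset.Icc 1 (k - 1), ρ i * X with hS
  set u₀ : ℝ := (((k : ℝ) - 1) * X - x) / t with hu₀def
  have htu : t * u₀ = ((k : ℝ) - 1) * X - x := by
    rcases eq_or_lt_of_le ht with h0 | h0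
    · have h1 : x = ((k : ℝ) - 1) * X := by nlinarith
      rw [hu₀def, ← h0]; simp [h1]
    · rw [hu₀def]; field_simp
  have hu₀ : u₀ ∈ Set.Icc (-vf) (-w) := by
    rcases eq_or_lt_of_le ht with h0 | h0
    · have h1 : x = ((k : ℝ) - 1) * X := by nlinarith
      rw [hu₀def, ← h0, h1]
      constructor <;> simp <;> linarith
    · constructor
      · rw [hu₀def, le_div_iff₀ h0]; nlinarith
      · rw [hu₀def, div_le_iff₀ h0]; nlinarith
  apply le_antisymm
  · apply iInf_le_of_le t
    apply iInf_le_of_le ht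
    apply iInf_le_of_le u₀
    apply iInf_le_of_le hu₀
    have hcond : t - t = 0 ∧ ((k : ℝ) - 1) * X ≤ x + t * u₀ ∧ x + t * u₀ ≤ (k : ℝ) * X := by
      refine ⟨by ring, ?_, ?_⟩ <;> rw [htu] <;> nlinarith
    rw [initCond, if_pos hcond]
    rw [phiStar_eq vf ρc ρm w hρc hρcm hw u₀ hu₀, ← EReal.coe_add]
    rw [EReal.coe_le_coe_iff]
    have h1 : t * (ρc * (u₀ + vf)) = ρc * (t * vf + ((k : ℝ) - 1) * X - x) := by
      linear_combination ρc * htu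
    have h2 : ρ k * ((x + t * u₀) - ((k : ℝ) - 1) * X) = 0 := by
      linear_combination ρ k * htu
    simp only
    linarith [h1, h2]
  · refine le_iInf fun T => le_iInf fun hT => le_iInf fun u => le_iInf fun hu => ?_
    rw [initCond]
    by_cases hcond : t - T = 0 ∧ ((k : ℝ) - 1) * X ≤ x + T * u ∧ x + T * u ≤ (k : ℝ) * X
    · obtain ⟨hT0, h1, h2⟩ := hcond
      have hTt : T = t := by linarith
      subst hTt
      rw [if_pos ⟨hT0, h1, h2⟩]
      rw [phiStar_eq vf ρc ρm w hρc hρcm hw u hu, ← EReal.coe_add, EReal.coe_le_coe_iff]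
      simp only
      nlinarith [mul_nonneg (by linarith : (0:ℝ) ≤ ρc - ρ k)
        (by linarith : (0:ℝ) ≤ x + T * u - ((k : ℝ) - 1) * X)]
    · rw [if_neg hcond, EReal.top_add_coe]
      exact le_top
end

section
/- If x ≥ 0 and t > nT + x/v_f, then the Lax–Hopf solution associated with the n-th upstream boundary value condition satisfies M_{γ_n}(t, x) = Σ_{i=1}^{n} q_in(i)·T + ρ_c·v_f·(t − x/v_f − nT). -/
/-- The `n`-th upstream boundary value condition (at position `0`): for
`t ∈ [(n−1)T, nT]`, `γ_n(t, 0) = Σ_{i=1}^{n−1} q_in(i)·T + q_in(n)·(t − (n−1)T)`,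
and `+∞` elsewhere. -/
noncomputable def upCond (T : ℝ) (qin : ℕ → ℝ) (n : ℕ) : ℝ × ℝ → EReal := fun p =>
  if p.2 = 0 ∧ ((n : ℝ) - 1) * T ≤ p.1 ∧ p.1 ≤ (n : ℝ) * T then
    ((((∑ i ∈ Finset.Icc 1 (n - 1), qin i * T)
        + qin n * (p.1 - ((n : ℝ) - 1) * T)) : ℝ) : EReal)
  else ⊤

open Finset

section LaxHopf

variable {vf w ρc ρm : ℝ}

theorem phiStar_eq_of_mem_Icc (hρc : 0 ≤ ρc) (hρcm : ρc ≤ ρm) (hw : w * (ρc - ρm) = vf * ρc)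
    {u : ℝ} (hu : u ∈ Set.Icc (-vf) (-w)) :
    phiStar vf w ρc ρm u = ρc * (u + vf) := by
  have hbound : ∀ y ∈ (fun p => p * u + fd vf w ρc ρm p) '' Set.Icc 0 ρm,
      y ≤ ρc * (u + vf) := by
    rintro y ⟨p, -, rfl⟩
    simp only [fd]
    split_ifs with hp
    · nlinarith [mul_nonneg (by linarith [hu.1] : 0 ≤ u + vf) (by linarith : 0 ≤ ρc - p)]
    · nlinarith [mul_nonneg (by linarith : 0 ≤ p - ρc) (by linarith [hu.2] : 0 ≤ -w - u)]
  have hmem : ρc * (u + vf) ∈ (fun p => p * u + fd vf w ρc ρm p) '' Set.Icc 0 ρm :=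
    ⟨ρc, ⟨hρc, hρcm⟩, by simp only [fd, le_refl, if_true]; ring⟩
  exact le_antisymm (csSup_le ⟨_, hmem⟩ hbound) (le_csSup ⟨_, hbound⟩ hmem)

theorem mul_phiStar_of_add_mul_eq_zero (hρc : 0 ≤ ρc) (hρcm : ρc ≤ ρm)
    (hw : w * (ρc - ρm) = vf * ρc) {u x τ : ℝ} (hu : u ∈ Set.Icc (-vf) (-w))
    (hxτ : x + τ * u = 0) :
    τ * phiStar vf w ρc ρm u = ρc * (vf * τ - x) := by
  rw [phiStar_eq_of_mem_Icc hρc hρcm hw hu]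
  linear_combination ρc * hxτ

theorem laxHopf_le {c : ℝ × ℝ → EReal} {t x τ u : ℝ} (hτ : 0 ≤ τ)
    (hu : u ∈ Set.Icc (-vf) (-w)) :
    laxHopf vf w ρc ρm c t x ≤ c (t - τ, x + τ * u) + ((τ * phiStar vf w ρc ρm u : ℝ) : EReal) :=
  iInf₂_le_of_le τ hτ (iInf₂_le u hu)

theorem le_laxHopf {c : ℝ × ℝ → EReal} {t x : ℝ} {a : EReal}
    (h : ∀ τ, 0 ≤ τ → ∀ u ∈ Set.Icc (-vf) (-w),
      a ≤ c (t - τ, x + τ * u) + ((τ * phiStar vf w ρc ρm u : ℝ) : EReal)) :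
    a ≤ laxHopf vf w ρc ρm c t x :=
  le_iInf₂ fun τ hτ => le_iInf₂ (h τ hτ)

end LaxHopf

section UpstreamCondition

variable {T : ℝ} {qin : ℕ → ℝ} {n : ℕ}

theorem sum_Icc_pred_add {M : Type*} [AddCommMonoid M] {f : ℕ → M} (hn : 1 ≤ n) :
    ∑ i ∈ Icc 1 (n - 1), f i + f n = ∑ i ∈ Icc 1 n, f i := by
  obtain ⟨m, rfl⟩ := Nat.exists_eq_add_of_le' hn
  rw [Nat.add_sub_cancel, sum_Icc_succ_top (by omega)]

theorem upCond_natCast_mul_zero (hT : 0 ≤ T) (hn : 1 ≤ n) :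
    upCond T qin n (n * T, 0) = ((∑ i ∈ Icc 1 n, qin i * T : ℝ) : EReal) := by
  rw [upCond, if_pos ⟨rfl, by linarith, le_rfl⟩, ← sum_Icc_pred_add hn]
  congr 2
  ring

theorem le_upCond {k : ℝ} (hn : 1 ≤ n) (hqk : qin n ≤ k) (p : ℝ × ℝ) :
    ((∑ i ∈ Icc 1 n, qin i * T + k * (p.1 - n * T) : ℝ) : EReal) ≤ upCond T qin n p := by
  rw [upCond]
  split_ifs with hp
  · rw [EReal.coe_le_coe_iff, ← sum_Icc_pred_add hn]
    nlinarith [mul_nonneg (sub_nonneg.2 hqk) (by linarith [hp.2.2] : 0 ≤ n * T - p.1)]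
  · exact le_top

variable {vf w ρc ρm : ℝ}

theorem le_laxHopf_upCond (hvf : vf ≠ 0) (hρc : 0 ≤ ρc) (hρcm : ρc ≤ ρm)
    (hw : w * (ρc - ρm) = vf * ρc) (hn : 1 ≤ n) (hq : qin n ≤ ρc * vf) (t x : ℝ) :
    ((∑ i ∈ Icc 1 n, qin i * T + ρc * vf * (t - x / vf - n * T) : ℝ) : EReal) ≤
      laxHopf vf w ρc ρm (upCond T qin n) t x := by
  refine le_laxHopf fun τ _ u hu => ?_
  by_cases hxτ : x + τ * u = 0
  · calc ((∑ i ∈ Icc 1 n, qin i * T + ρc * vf * (t - x / vf - n * T) : ℝ) : EReal)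
        = ((∑ i ∈ Icc 1 n, qin i * T + ρc * vf * ((t - τ) - n * T) : ℝ) : EReal) +
            ((ρc * (vf * τ - x) : ℝ) : EReal) := by
          rw [← EReal.coe_add, EReal.coe_eq_coe_iff]
          linear_combination -ρc * mul_div_cancel₀ x hvf
      _ ≤ upCond T qin n (t - τ, x + τ * u) + ((τ * phiStar vf w ρc ρm u : ℝ) : EReal) := by
          rw [mul_phiStar_of_add_mul_eq_zero hρc hρcm hw hu hxτ]
          gcongr
          exact le_upCond hn hq (t - τ, x + τ * u)
  · rw [upCond, if_neg fun h => hxτ h.1, EReal.top_add_coe]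
    exact le_top

theorem laxHopf_upCond_le (hvf : 0 < vf) (hρc : 0 ≤ ρc) (hρcm : ρc ≤ ρm)
    (hw : w * (ρc - ρm) = vf * ρc) (hw0 : w ≤ 0) (hT : 0 ≤ T) (hn : 1 ≤ n) {t x : ℝ}
    (hx : 0 ≤ x) (ht : n * T + x / vf < t) :
    laxHopf vf w ρc ρm (upCond T qin n) t x ≤
      ((∑ i ∈ Icc 1 n, qin i * T + ρc * vf * (t - x / vf - n * T) : ℝ) : EReal) := by
  set τ := t - n * T with hτ_def
  have hτ : 0 < τ := by have := div_nonneg hx hvf.le; linarith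
  have hxτ_le : x ≤ vf * τ := by
    have := (div_lt_iff₀' hvf).1 (show x / vf < τ by linarith); linarith
  have hu : -x / τ ∈ Set.Icc (-vf) (-w) := by
    refine ⟨by rw [le_div_iff₀ hτ]; linarith, ?_⟩
    have := div_nonpos_of_nonpos_of_nonneg (neg_nonpos.2 hx) hτ.le
    linarith
  have hxτ : x + τ * (-x / τ) = 0 := by field_simp; ring
  calc laxHopf vf w ρc ρm (upCond T qin n) t x
      ≤ upCond T qin n (t - τ, x + τ * (-x / τ)) +
          ((τ * phiStar vf w ρc ρm (-x / τ) : ℝ) : EReal) := laxHopf_le hτ.le hu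
    _ = ((∑ i ∈ Icc 1 n, qin i * T : ℝ) : EReal) + ((ρc * (vf * τ - x) : ℝ) : EReal) := by
        rw [hxτ, mul_phiStar_of_add_mul_eq_zero hρc hρcm hw hu hxτ, sub_sub_cancel,
          upCond_natCast_mul_zero hT hn]
    _ = _ := by
        rw [← EReal.coe_add, EReal.coe_eq_coe_iff]
        linear_combination ρc * vf * hτ_def + ρc * mul_div_cancel₀ x hvf.ne'

end UpstreamCondition

/-- If `x ≥ 0` and `t > nT + x/v_f`, then
`M_{γ_n}(t, x) = Σ_{i=1}^{n} q_in(i)·T + ρ_c·v_f·(t − x/v_f − nT)`. -/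
theorem laxHopf_upCond_late (vf ρc ρm w T : ℝ) (hvf : 0 < vf) (hρc : 0 < ρc)
    (hρcm : ρc < ρm) (hw : w = vf * ρc / (ρc - ρm)) (hT : 0 < T)
    (n : ℕ) (hn : 1 ≤ n) (qin : ℕ → ℝ)
    (hq : ∀ i : ℕ, 1 ≤ i → i ≤ n → qin i ∈ Set.Icc 0 (ρc * vf))
    (t x : ℝ) (hx : 0 ≤ x) (ht : t > (n : ℝ) * T + x / vf) :
    laxHopf vf w ρc ρm (upCond T qin n) t x =
      ((((∑ i ∈ Finset.Icc 1 n, qin i * T)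
          + ρc * vf * (t - x / vf - (n : ℝ) * T)) : ℝ) : EReal) := by
  have hw' : w * (ρc - ρm) = vf * ρc := by
    rw [hw]; field_simp [sub_ne_zero.2 hρcm.ne]
  have hw0 : w ≤ 0 := by
    rw [hw]; exact div_nonpos_of_nonneg_of_nonpos (by positivity) (by linarith)
  exact le_antisymm (laxHopf_upCond_le hvf hρc.le hρcm.le hw' hw0 hT.le hn hx ht)
    (le_laxHopf_upCond hvf.ne' hρc.le hρcm.le hw' hn (hq n hn le_rfl).2 t x)
end
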